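/- Every source transitive tree (finite-source or infinite-source transitive tree) D, possibly on a countably infinite vertex set, has the property that its only identifying code is the whole vertex set V(D). -/

import Mathlib

def inBall {V : Type} (A : V → V → Prop) (x : V) : Set V := insert x {w | A w x}

def IsSepCode {V : Type} (A : V → V → Prop) (C : Set V) : Prop :=
  ∀ u v : V, u ≠ v → inBall A u ∩ C ≠ inBall A v ∩ C

def IsIdCode {V : Type} (A : V → V → Prop) (C : Set V) : Prop :=
  (∀ u : V, (inBall A u ∩ C).Nonempty) ∧ IsSepCode A C

def TwinFree {V : Type} (A : V → V → Prop) : Prop :=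
  ∀ u v : V, u ≠ v → inBall A u ≠ inBall A v

/-- An oriented graph is a *source transitive tree* if every closed in-ball `B₁⁺(x)`
induces the transitive closure of a directed path `P_x = B₁⁺(x)` ending at `x` (the
induced relation is a strict total order with greatest element `x`), any two such paths
intersect in a path `P_z`, and either all the paths are finite (fst-tree) or all are
infinite with each vertex having finitely many successors on its path (ist-tree). -/
def IsSourceTransTree {V : Type} (A : V → V → Prop) : Prop :=
  (∀ x y : V, ¬ (A x y ∧ A y x)) ∧
  (∀ x : V, ∀ y ∈ inBall A x, ∀ z ∈ inBall A x, y ≠ z → A y z ∨ A z y) ∧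
  (∀ x : V, ∀ y ∈ inBall A x, ∀ z ∈ inBall A x, ∀ w ∈ inBall A x,
    A y z → A z w → A y w) ∧
  (∀ x y : V, ∃ z : V, inBall A x ∩ inBall A y = inBall A z) ∧
  ((∀ x : V, (inBall A x).Finite) ∨
    (∀ x : V, (inBall A x).Infinite ∧
      ∀ y ∈ inBall A x, {z ∈ inBall A x | A y z}.Finite))

/-!
If a vertex `v` lies outside an identifying code `C`, the codewords in the path `B₁⁺(v)` form a
chain, and the finiteness condition of a source transitive tree (finite paths, or finitely many
successors on a path) gives this chain a greatest element `m ≠ v`. Since `B₁⁺(m) ⊆ B₁⁺(v)`, the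
two balls contain exactly the same codewords, so `C` does not separate `m` from `v`.
-/

section Chain

variable {α : Type*} {r : α → α → Prop} {s : Set α}

theorem exists_greatest_of_finite
    (htot : ∀ y ∈ s, ∀ z ∈ s, y ≠ z → r y z ∨ r z y)
    (htrans : ∀ x ∈ s, ∀ y ∈ s, ∀ z ∈ s, r x y → r y z → r x z)
    {t : Set α} (ht : t.Finite) (hts : t ⊆ s) (hne : t.Nonempty) :
    ∃ m ∈ t, ∀ w ∈ t, w ≠ m → r w m := by
  induction t, ht using Set.Finite.induction_on with
  | empty => exact absurd hne Set.not_nonempty_empty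
  | @insert a t hat _ ih =>
    rcases t.eq_empty_or_nonempty with rfl | htne
    · exact ⟨a, Set.mem_insert a _,
        fun w hw hwa => absurd (hw.resolve_right (Set.notMem_empty w)) hwa⟩
    obtain ⟨m, hm, hmax⟩ := ih ((Set.subset_insert a t).trans hts) htne
    have has : a ∈ s := hts (Set.mem_insert a t)
    have hms : m ∈ s := hts (Set.subset_insert a t hm)
    have ham : a ≠ m := fun e => hat (e ▸ hm)
    rcases htot a has m hms ham with ham' | hma
    · exact ⟨m, Or.inr hm, fun w hw hwm => hw.elim (fun e => e ▸ ham') (hmax w · hwm)⟩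
    · refine ⟨a, Or.inl rfl, fun w hw hwa => ?_⟩
      have hwt : w ∈ t := hw.resolve_left hwa
      by_cases hwm : w = m
      · exact hwm ▸ hma
      · exact htrans w (hts (Or.inr hwt)) m hms a has (hmax w hwt hwm) hma

theorem exists_greatest_of_finite_successors
    (htot : ∀ y ∈ s, ∀ z ∈ s, y ≠ z → r y z ∨ r z y)
    (htrans : ∀ x ∈ s, ∀ y ∈ s, ∀ z ∈ s, r x y → r y z → r x z)
    {t : Set α} (hts : t ⊆ s) {c : α} (hc : c ∈ t) (hfin : {w ∈ t | r c w}.Finite) :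
    ∃ m ∈ t, ∀ w ∈ t, w ≠ m → r w m := by
  have hsub : insert c {w ∈ t | r c w} ⊆ t := Set.insert_subset hc fun _ hw => hw.1
  obtain ⟨m, hm, hmax⟩ := exists_greatest_of_finite htot htrans (hfin.insert c)
    (hsub.trans hts) (Set.insert_nonempty c _)
  refine ⟨m, hsub hm, fun w hw hwm => ?_⟩
  by_cases hwF : w ∈ insert c {w ∈ t | r c w}
  · exact hmax w hwF hwm
  have hwc : w ≠ c := fun e => hwF (Or.inl e)
  have hwc' : r w c :=
    (htot w (hts hw) c (hts hc) hwc).resolve_right fun hcw => hwF (Or.inr ⟨hw, hcw⟩)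
  by_cases hcm : c = m
  · exact hcm ▸ hwc'
  · exact htrans w (hts hw) c (hts hc) m (hts (hsub hm)) hwc' (hmax c (Or.inl rfl) hcm)

end Chain

section SourceTransTree

variable {V : Type} {A : V → V → Prop}

theorem mem_inBall_self (x : V) : x ∈ inBall A x := Set.mem_insert x _

theorem inBall_subset_of_adj (hasym : ∀ x y : V, ¬ (A x y ∧ A y x))
    (hinter : ∀ x y : V, ∃ z : V, inBall A x ∩ inBall A y = inBall A z)
    {u v : V} (huv : A u v) : inBall A u ⊆ inBall A v := by
  obtain ⟨z, hz⟩ := hinter u v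
  have hu : u ∈ inBall A z := hz ▸ ⟨mem_inBall_self u, Or.inr huv⟩
  have hz' : z ∈ inBall A u := (hz ▸ mem_inBall_self z : z ∈ inBall A u ∩ inBall A v).1
  obtain rfl : u = z := by
    rcases hu with e | huz
    · exact e
    rcases hz' with rfl | hzu
    · exact (hasym z z ⟨huz, huz⟩).elim
    · exact (hasym u z ⟨huz, hzu⟩).elim
  exact Set.inter_eq_left.1 hz

theorem IsSourceTransTree.exists_greatest_inBall_inter (h : IsSourceTransTree A) (v : V)
    {C : Set V} (hne : (inBall A v ∩ C).Nonempty) :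
    ∃ m ∈ inBall A v ∩ C, ∀ w ∈ inBall A v ∩ C, w ≠ m → A w m := by
  obtain ⟨-, htot, htrans, -, hfin⟩ := h
  obtain ⟨c, hc⟩ := hne
  refine exists_greatest_of_finite_successors (htot v) (htrans v) Set.inter_subset_left hc ?_
  rcases hfin with hfin | hfin
  · exact (hfin v).subset fun w hw => hw.1.1
  · exact ((hfin v).2 c hc.1).subset fun w hw => ⟨hw.1.1, hw.2⟩

theorem IsSourceTransTree.inBall_inter_eq_of_greatest (h : IsSourceTransTree A) {C : Set V}
    {v m : V} (hm : m ∈ inBall A v ∩ C) (hmv : m ≠ v)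
    (hmax : ∀ w ∈ inBall A v ∩ C, w ≠ m → A w m) :
    inBall A m ∩ C = inBall A v ∩ C := by
  obtain ⟨hasym, -, -, hinter, -⟩ := h
  have hAmv : A m v := hm.1.resolve_left hmv
  refine Set.Subset.antisymm
    (Set.inter_subset_inter_left C (inBall_subset_of_adj hasym hinter hAmv)) ?_
  intro w hw
  by_cases hwm : w = m
  · subst hwm
    exact ⟨mem_inBall_self w, hw.2⟩
  · exact ⟨Or.inr (hmax w hw hwm), hw.2⟩

end SourceTransTree

theorem sourceTransTree_only_idCode_univ_general {V : Type} (A : V → V → Prop)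
    (h : IsSourceTransTree A) :
    ∀ C : Set V, IsIdCode A C → C = Set.univ := by
  rintro C ⟨hdom, hsep⟩
  refine Set.eq_univ_of_forall fun v => ?_
  by_contra hv
  obtain ⟨m, hm, hmax⟩ := h.exists_greatest_inBall_inter v (hdom v)
  have hmv : m ≠ v := fun e => hv (e ▸ hm.2)
  exact hsep m v hmv (h.inBall_inter_eq_of_greatest hm hmv hmax)

/-- The only identifying code of a (finite or countably infinite) source transitive tree
is its whole vertex set. -/
theorem sourceTransTree_only_idCode_univ {V : Type} [Countable V] (A : V → V → Prop)
    (h : IsSourceTransTree A) :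
    ∀ C : Set V, IsIdCode A C → C = Set.univ :=
  sourceTransTree_only_idCode_univ_general A h
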